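/- Let M be a p×q pattern matrix and N a q×s pattern matrix. If each row of N has exactly one entry equal to * and all other entries equal to 0, then P(M)P(N) = P(MN), where P(M)P(N) denotes the set of products {AB : A ∈ P(M), B ∈ P(N)} and MN is the pattern matrix product. -/

import Mathlib

inductive PSym | zero | star | any
deriving DecidableEq

namespace PSym

def symAdd : PSym → PSym → PSym
  | zero, x => x
  | x, zero => x
  | _, _ => any

def symMul : PSym → PSym → PSym
  | zero, _ => zero
  | _, zero => zero
  | star, star => star
  | _, _ => any

instance : Zero PSym := ⟨zero⟩
instance : Add PSym := ⟨symAdd⟩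

instance : AddCommMonoid PSym where
  add_assoc a b c := by cases a <;> cases b <;> cases c <;> rfl
  zero_add a := by cases a <;> rfl
  add_zero a := by cases a <;> rfl
  add_comm a b := by cases a <;> cases b <;> rfl
  nsmul := nsmulRec

end PSym

/-- The pattern class of a pattern matrix. -/
def PatClass {p q : Type*} (M : Matrix p q PSym) : Set (Matrix p q ℝ) :=
  {A | ∀ i j, (M i j = PSym.zero → A i j = 0) ∧ (M i j = PSym.star → A i j ≠ 0)}

/-- Product of pattern matrices. -/
def patMul {p q s : ℕ} (M : Matrix (Fin p) (Fin q) PSym) (N : Matrix (Fin q) (Fin s) PSym) :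
    Matrix (Fin p) (Fin s) PSym :=
  fun i j => ∑ k, PSym.symMul (M i k) (N k j)

/-- A 1×q pattern vector `M` is independent of an r×q pattern matrix `N`. -/
def Independent {q r : ℕ} (M : Matrix (Fin 1) (Fin q) PSym) (N : Matrix (Fin r) (Fin q) PSym) : Prop :=
  ∀ M₀ ∈ PatClass M, ∀ N₀ ∈ PatClass N, ∀ (z₁ : ℝ) (z₂ : Fin r → ℝ),
    (∀ j, z₁ * M₀ 0 j + ∑ i, z₂ i * N₀ i j = 0) → z₁ = 0

/-!
The inclusion `P(M)P(N) ⊆ P(MN)` holds for every `N`, since the symbol operations over-approximate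
the real ones. For the converse, let the `*` of row `k` of `N` sit in column `f k`. Then `(MN) i j`
is the symbol sum `∑_{f k = j} M i k`, and the real sums `∑ a k` with each `a k` in the class of
`m k` fill out exactly the class of a symbol sum `∑ m k`: by induction this reduces to two
summands, where the only nontrivial case, `* + * = ?`, says that every real is a sum of two
nonzero reals. So each `X i j` splits along the fiber of `j`, the pieces form `A`, and `B` is the
0/1 matrix of `f`.
-/

namespace PSym

def Admits : PSym → ℝ → Prop
  | zero, x => x = 0
  | star, x => x ≠ 0
  | any, _ => True

@[simp]
theorem admits_zero_iff (x : ℝ) : (0 : PSym).Admits x ↔ x = 0 := Iff.rfl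

theorem mem_patClass {p q : Type*} {M : Matrix p q PSym} {A : Matrix p q ℝ} :
    A ∈ PatClass M ↔ ∀ i j, (M i j).Admits (A i j) := by
  refine forall₂_congr fun i j => ?_
  cases M i j <;> simp [Admits]

theorem Admits.symMul {m n : PSym} {x y : ℝ} (hx : m.Admits x) (hy : n.Admits y) :
    (symMul m n).Admits (x * y) := by
  cases m <;> cases n <;> simp_all [Admits, PSym.symMul]

theorem admits_add_iff (m n : PSym) (x : ℝ) :
    (m + n).Admits x ↔ ∃ a b, m.Admits a ∧ n.Admits b ∧ a + b = x := by
  refine ⟨fun h => ?_, ?_⟩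
  · cases m <;> cases n
    case star.star =>
      exact ⟨|x| + 1, x - (|x| + 1), (by positivity : 0 < |x| + 1).ne',
        (by linarith [le_abs_self x] : x - (|x| + 1) < 0).ne, by ring⟩
    all_goals first
      | exact ⟨0, x, rfl, h, zero_add x⟩
      | exact ⟨x, 0, h, rfl, add_zero x⟩
      | exact ⟨x - 1, 1, trivial, by simp [Admits], sub_add_cancel x 1⟩
      | exact ⟨1, x - 1, by simp [Admits], trivial, add_sub_cancel 1 x⟩
  · rintro ⟨a, b, ha, hb, rfl⟩
    cases m <;> cases n <;> simp_all [Admits] <;> trivial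

theorem admits_sum_iff {ι : Type*} (T : Finset ι) (m : ι → PSym) (x : ℝ) :
    (∑ k ∈ T, m k).Admits x ↔
      ∃ a : ι → ℝ, (∀ k ∈ T, (m k).Admits (a k)) ∧ ∑ k ∈ T, a k = x := by
  classical
  induction T using Finset.induction_on generalizing x with
  | empty =>
    exact ⟨fun h => ⟨0, by simp, by simpa [eq_comm] using h⟩, fun ⟨_, _, h⟩ => h.symm⟩
  | insert i T hi ih =>
    simp only [Finset.sum_insert hi, admits_add_iff, ih, Finset.forall_mem_insert]
    constructor
    · rintro ⟨b, _, hb, ⟨a, ha, rfl⟩, rfl⟩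
      refine ⟨Function.update a i b, ⟨by simpa, fun k hk => ?_⟩, ?_⟩
      · rw [Function.update_of_ne (ne_of_mem_of_not_mem hk hi)]
        exact ha k hk
      · rw [Finset.sum_update_of_notMem hi, Function.update_self]
    · rintro ⟨a, ⟨hai, ha⟩, rfl⟩
      exact ⟨a i, _, hai, ⟨a, ha, rfl⟩, rfl⟩

end PSym

open PSym

theorem mul_mem_patClass_patMul {p q s : ℕ} {M : Matrix (Fin p) (Fin q) PSym}
    {N : Matrix (Fin q) (Fin s) PSym} {A : Matrix (Fin p) (Fin q) ℝ}
    {B : Matrix (Fin q) (Fin s) ℝ}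
    (hA : A ∈ PatClass M) (hB : B ∈ PatClass N) : A * B ∈ PatClass (patMul M N) :=
  mem_patClass.2 fun i j => (admits_sum_iff _ _ _).2
    ⟨fun k => A i k * B k j,
      fun k _ => (mem_patClass.1 hA i k).symMul (mem_patClass.1 hB k j), rfl⟩

def graphPattern {κ σ : Type*} [DecidableEq σ] (f : κ → σ) : Matrix κ σ PSym :=
  fun k j => if f k = j then star else zero

theorem exists_eq_graphPattern {κ σ : Type*} [DecidableEq σ] {N : Matrix κ σ PSym}
    (hN : ∀ k, (∃! j, N k j = star) ∧ ∀ j, N k j ≠ star → N k j = zero) :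
    ∃ f : κ → σ, N = graphPattern f := by
  choose f hf huniq using fun k => (hN k).1
  refine ⟨f, funext₂ fun k j => ?_⟩
  by_cases h : f k = j
  · simp [graphPattern, ← h, hf]
  · simpa [graphPattern, h] using (hN k).2 j fun hs => h (huniq k j hs).symm

theorem patMul_graphPattern_apply {p q s : ℕ} (M : Matrix (Fin p) (Fin q) PSym)
    (f : Fin q → Fin s) (i : Fin p) (j : Fin s) :
    patMul M (graphPattern f) i j = ∑ k, if f k = j then M i k else 0 := by
  refine Finset.sum_congr rfl fun k _ => ?_
  unfold graphPattern
  split_ifs <;> cases M i k <;> rfl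

theorem exists_mul_eq_of_mem_patClass_patMul_graphPattern {p q s : ℕ}
    {M : Matrix (Fin p) (Fin q) PSym} {f : Fin q → Fin s} {X : Matrix (Fin p) (Fin s) ℝ}
    (hX : X ∈ PatClass (patMul M (graphPattern f))) :
    ∃ A ∈ PatClass M, ∃ B ∈ PatClass (graphPattern f), X = A * B := by
  have hXij i j := patMul_graphPattern_apply M f i j ▸ mem_patClass.1 hX i j
  choose a ha hsum using fun i j => (admits_sum_iff _ _ _).1 (hXij i j)
  have ha_fiber i k : (M i k).Admits (a i (f k) k) := by
    simpa using ha i (f k) k (Finset.mem_univ _)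
  have ha_off {i j k} (h : f k ≠ j) : a i j k = 0 := by
    simpa [h] using ha i j k (Finset.mem_univ _)
  refine ⟨Matrix.of fun i k => a i (f k) k, mem_patClass.2 ha_fiber,
    Matrix.of fun k j => if f k = j then 1 else 0, mem_patClass.2 fun k j => ?_, ?_⟩
  · by_cases h : f k = j <;> simp [graphPattern, Admits, h]
  · ext i j
    rw [Matrix.mul_apply, ← hsum i j]
    refine Finset.sum_congr rfl fun k _ => ?_
    by_cases h : f k = j <;> simp [h, ha_off]

/-- If each row of `N` has exactly one `*` entry and all other
entries `0`, then `P(M)P(N) = P(MN)`. -/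
theorem pattern_class_mul_of_rows {p q s : ℕ}
    (M : Matrix (Fin p) (Fin q) PSym) (N : Matrix (Fin q) (Fin s) PSym)
    (hN : ∀ k : Fin q, (∃! j : Fin s, N k j = PSym.star) ∧
      ∀ j : Fin s, N k j ≠ PSym.star → N k j = PSym.zero) :
    {X : Matrix (Fin p) (Fin s) ℝ | ∃ A ∈ PatClass M, ∃ B ∈ PatClass N, X = A * B} =
      PatClass (patMul M N) := by
  obtain ⟨f, rfl⟩ := exists_eq_graphPattern hN
  ext X
  constructor
  · rintro ⟨A, hA, B, hB, rfl⟩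
    exact mul_mem_patClass_patMul hA hB
  · exact exists_mul_eq_of_mem_patClass_patMul_graphPattern
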